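/- arXiv:1204.5205 — 11 statements merged into one kernel-verified Lean document; each statement's English description precedes it below -/
import Mathlib

section
/- Let R be a (possibly noncommutative) ring and let I be a right ideal of the polynomial ring S = R[x]. If the right annihilator r_S(I) = {g ∈ S : fg = 0 for all f ∈ I} is nonzero, then r_R(I) = {c ∈ R : fc = 0 for all f ∈ I} is nonzero. (This is the σ = id instance of the paper's main theorem on R[x;σ]; for σ = id the hypotheses 'r_S(I) is σ-stable' and 'R is σ-compatible' hold automatically.) -/
/-!
Choose `g ≠ 0` of minimal degree in the right annihilator `A` of `I`. Since `I` is a right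
ideal, `A` is a left ideal, so every nonzero `C a * g` lies in `A` and has degree at least
`deg g`; hence `a * lc(g) = 0` forces `C a * g = 0`. If `f * g = 0`, comparing top coefficients
gives `lc(f) * lc(g) = 0`, so `C lc(f) * g = 0`, and removing the leading term of `f` shows by
induction that `C a * g = 0` for every coefficient `a` of `f`. Reading off the coefficient of
`x ^ deg g` gives `f * C lc(g) = 0`, so `c = lc(g)` works.
-/

open Polynomial

namespace Polynomial

variable {R : Type*} [Semiring R] {g : R[X]}

theorem C_mul_eq_zero_of_mul_leadingCoeff_eq_zero
    (hg : ∀ a : R, C a * g ≠ 0 → g.natDegree ≤ (C a * g).natDegree)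
    {a : R} (ha : a * g.leadingCoeff = 0) : C a * g = 0 := by
  by_contra hne
  have hdeg : (C a * g).natDegree = g.natDegree :=
    le_antisymm (natDegree_C_mul_le a g) (hg a hne)
  apply hne
  rw [← leadingCoeff_eq_zero, leadingCoeff, hdeg, coeff_C_mul]
  exact ha

theorem C_coeff_mul_eq_zero_of_mul_eq_zero
    (hg : ∀ a : R, C a * g ≠ 0 → g.natDegree ≤ (C a * g).natDegree)
    (f : R[X]) (hfg : f * g = 0) (i : ℕ) : C (f.coeff i) * g = 0 := by
  by_cases hf : f = 0
  · simp [hf]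
  have hlead : C f.leadingCoeff * g = 0 := by
    apply C_mul_eq_zero_of_mul_leadingCoeff_eq_zero hg
    rw [← coeff_mul_degree_add_degree, hfg, coeff_zero]
  have herase : f.eraseLead * g = 0 := by
    calc f.eraseLead * g = f.eraseLead * g + X ^ f.natDegree * (C f.leadingCoeff * g) := by
          rw [hlead, mul_zero, add_zero]
      _ = f * g := by rw [← mul_assoc, X_pow_mul, ← add_mul, eraseLead_add_C_mul_X_pow]
      _ = 0 := hfg
  by_cases hi : i = f.natDegree
  · rw [hi]
    exact hlead
  · rw [← eraseLead_coeff_of_ne i hi]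
    exact C_coeff_mul_eq_zero_of_mul_eq_zero hg f.eraseLead herase i
termination_by f.support.card
decreasing_by
  rw [← card_support_eraseLead_add_one hf]
  exact Nat.lt_succ_self _

theorem mul_C_leadingCoeff_eq_zero_of_mul_eq_zero
    (hg : ∀ a : R, C a * g ≠ 0 → g.natDegree ≤ (C a * g).natDegree)
    {f : R[X]} (hfg : f * g = 0) : f * C g.leadingCoeff = 0 := by
  ext k
  rw [coeff_mul_C, coeff_zero, leadingCoeff, ← coeff_C_mul,
    C_coeff_mul_eq_zero_of_mul_eq_zero hg f hfg k, coeff_zero]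

end Polynomial

theorem rightAnn_ne_zero_of_rightAnn_polynomial_ne_zero_general
    (R : Type*) [Ring R] (I : Set (Polynomial R))
    (hmul : ∀ f ∈ I, ∀ s : Polynomial R, f * s ∈ I)
    (hann : ∃ g : Polynomial R, g ≠ 0 ∧ ∀ f ∈ I, f * g = 0) :
    ∃ c : R, c ≠ 0 ∧ ∀ f ∈ I, f * Polynomial.C c = 0 := by
  obtain ⟨g, ⟨hg0, hgI⟩, hmin⟩ := (measure natDegree).wf.has_min
    {g : R[X] | g ≠ 0 ∧ ∀ f ∈ I, f * g = 0} hann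
  have hCg : ∀ a : R, C a * g ≠ 0 → g.natDegree ≤ (C a * g).natDegree := fun a ha =>
    not_lt.mp <| hmin _ ⟨ha, fun f hf => by rw [← mul_assoc]; exact hgI _ (hmul f hf (C a))⟩
  exact ⟨g.leadingCoeff, leadingCoeff_ne_zero.mpr hg0,
    fun f hf => mul_C_leadingCoeff_eq_zero_of_mul_eq_zero hCg (hgI f hf)⟩

/-- **A generalization of McCoy's theorem** (σ = id instance).
Let `R` be a ring and `I` a right ideal of `S = R[x]` (an additive subgroup closed under
right multiplication by `S`).  If the right annihilator of `I` in `S` is nonzero, then the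
right annihilator of `I` in `R` is nonzero. -/
theorem rightAnn_ne_zero_of_rightAnn_polynomial_ne_zero
    (R : Type*) [Ring R] (I : Set (Polynomial R))
    (hzero : (0 : Polynomial R) ∈ I)
    (hadd : ∀ f ∈ I, ∀ g ∈ I, f + g ∈ I)
    (hneg : ∀ f ∈ I, -f ∈ I)
    (hmul : ∀ f ∈ I, ∀ s : Polynomial R, f * s ∈ I)
    (hann : ∃ g : Polynomial R, g ≠ 0 ∧ ∀ f ∈ I, f * g = 0) :
    ∃ c : R, c ≠ 0 ∧ ∀ f ∈ I, f * Polynomial.C c = 0 :=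
  rightAnn_ne_zero_of_rightAnn_polynomial_ne_zero_general R I hmul hann
end

section
/- Let R be a (possibly noncommutative) ring and f(x) ∈ R[x]. If there exists a nonzero g(x) ∈ R[x] with f(x)h(x)g(x) = 0 for all h(x) ∈ R[x], then there exists a nonzero c ∈ R with f(x)h(x)c = 0 for all h(x) ∈ R[x]. Equivalently, if r_{R[x]}(f(x)R[x]) ≠ 0 then r_{R[x]}(f(x)R[x]) ∩ R ≠ 0. -/
/-!
Take `g ≠ 0` of minimal degree `n` in the annihilator; it is a left ideal of `R[x]`. If
`r` kills the leading coefficient of `g`, then `C r * g` lies in the annihilator and has degree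
`< n`, so it vanishes. For `q = f h`, comparing the coefficient of `x^(i+n)` in `q g = 0` shows,
by downward induction on `i`, that each `C (q i)` kills `g`. In particular every coefficient of
`q` kills the leading coefficient `c` of `g`, i.e. `q * C c = 0`.
-/

open Polynomial

/-- The right annihilator `r_A(aA)` of the principal right ideal `aA`, as a left ideal. -/
def rightAnnOfPrincipalRight {A : Type*} [Ring A] (a : A) : Ideal A where
  carrier := {g | ∀ h, a * h * g = 0}
  zero_mem' := fun h => mul_zero _
  add_mem' := fun hg hg' h => by rw [mul_add, hg h, hg' h, add_zero]
  smul_mem' := fun k g hg h => by rw [smul_eq_mul, ← mul_assoc, mul_assoc a, hg]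

namespace Polynomial

variable {R : Type*} [Ring R]

theorem C_mul_eq_zero_of_mul_leadingCoeff_eq_zero_s1 {I : Ideal R[X]} {g : R[X]} (hg : g ∈ I)
    (hmin : ∀ p ∈ I, p ≠ 0 → g.natDegree ≤ p.natDegree) {r : R}
    (hr : r * g.leadingCoeff = 0) : C r * g = 0 := by
  by_contra hne
  have hdeg : (C r * g).natDegree = g.natDegree :=
    le_antisymm (natDegree_C_mul_le r g) (hmin _ (I.mul_mem_left _ hg) hne)
  have hlead : (C r * g).leadingCoeff = 0 := by
    rw [leadingCoeff, hdeg, coeff_C_mul]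
    exact hr
  exact hne (leadingCoeff_eq_zero.mp hlead)

theorem C_coeff_mul_eq_zero_of_mul_eq_zero_s1 {q g : R[X]}
    (hg : ∀ r, r * g.leadingCoeff = 0 → C r * g = 0) (hqg : q * g = 0) (i : ℕ) :
    C (q.coeff i) * g = 0 := by
  by_cases hi : q.natDegree < i
  · rw [coeff_eq_zero_of_natDegree_lt hi, C_0, zero_mul]
  have above : ∀ a, i < a → C (q.coeff a) * g = 0 := fun a _ =>
    C_coeff_mul_eq_zero_of_mul_eq_zero_s1 hg hqg a
  apply hg
  -- only the term `q i * g n` of the coefficient of `x^(i+n)` in `q g` can be nonzero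
  have hcoeff : (q * g).coeff (i + g.natDegree) = q.coeff i * g.leadingCoeff := by
    rw [coeff_mul]
    refine Finset.sum_eq_single (i, g.natDegree) (fun ⟨a, b⟩ hab hne => ?_) (by simp)
    rw [Finset.HasAntidiagonal.mem_antidiagonal] at hab
    dsimp only
    rcases lt_or_ge i a with hia | hai
    · simpa [coeff_C_mul] using congrArg (coeff · b) (above a hia)
    · have hab' : a < i := lt_of_le_of_ne hai fun h => hne (by ext <;> simp <;> omega)
      rw [coeff_eq_zero_of_natDegree_lt (by omega : g.natDegree < b), mul_zero]
  rw [← hcoeff, hqg, coeff_zero]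
termination_by q.natDegree + 1 - i

end Polynomial

/-- If the right annihilator of the right ideal `f(x)R[x]` of `R[x]` is nonzero, then it
contains a nonzero constant: from a nonzero `g(x)` with `f(x)h(x)g(x) = 0` for all
`h(x) ∈ R[x]`, one obtains a nonzero `c ∈ R` with `f(x)h(x)c = 0` for all `h(x) ∈ R[x]`. -/
theorem rightAnn_principal_right_ideal_meets_R
    (R : Type*) [Ring R] (f : Polynomial R)
    (hann : ∃ g : Polynomial R, g ≠ 0 ∧ ∀ h : Polynomial R, f * h * g = 0) :
    ∃ c : R, c ≠ 0 ∧ ∀ h : Polynomial R, f * h * Polynomial.C c = 0 := by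
  set I := rightAnnOfPrincipalRight f
  obtain ⟨g₀, hg₀, hg₀I⟩ := hann
  obtain ⟨g, ⟨hgI, hg⟩, hmin⟩ := (InvImage.wf natDegree wellFounded_lt).has_min
    {p : R[X] | p ∈ I ∧ p ≠ 0} ⟨g₀, hg₀I, hg₀⟩
  have hlead : ∀ r, r * g.leadingCoeff = 0 → C r * g = 0 := fun r =>
    C_mul_eq_zero_of_mul_leadingCoeff_eq_zero_s1 hgI fun p hpI hp => not_lt.mp (hmin p ⟨hpI, hp⟩)
  refine ⟨g.leadingCoeff, leadingCoeff_ne_zero.mpr hg, fun h => ext fun i => ?_⟩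
  have hi := C_coeff_mul_eq_zero_of_mul_eq_zero_s1 hlead (hgI h) i
  simpa [coeff_mul_C, coeff_C_mul] using congrArg (coeff · g.natDegree) hi
end

section
/- Let R be a ring. If the polynomial ring R[x] is semicommutative, then R is right McCoy. -/
open Polynomial

/-- A ring is semicommutative if `a * b = 0` implies `a * r * b = 0` for every `r`. -/
def IsSemicommutativeRing (S : Type*) [Ring S] : Prop :=
  ∀ a b : S, a * b = 0 → ∀ r : S, a * r * b = 0

/-- A ring is right McCoy if whenever nonzero polynomials `f, g` over it satisfy
`f * g = 0`, there is a nonzero constant `c` with `f * C c = 0`. -/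
def IsRightMcCoyRing (S : Type*) [Ring S] : Prop :=
  ∀ f g : Polynomial S, f ≠ 0 → g ≠ 0 → f * g = 0 →
    ∃ c : S, c ≠ 0 ∧ f * Polynomial.C c = 0

/-!
Take `p` of minimal degree `n` among the nonzero polynomials with `F * p = 0`, and let `b` be its
leading coefficient. Peel the terms of `F` off from the top: if `f * p = 0` and `a` is the leading
coefficient of `f`, then `a * b = 0`, so `C a * p` has degree `< n`; semicommutativity of `R[X]`
gives `F * C a * p = 0`, hence `C a * p = 0` by minimality, and therefore
`f.eraseLead * p = 0`. Every coefficient `a` of `F` thus satisfies `a * b = 0`, i.e. `F * C b = 0`.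
-/

namespace Polynomial

theorem leadingCoeff_mul_leadingCoeff_eq_zero {S : Type*} [Semiring S] {f p : S[X]}
    (h : f * p = 0) : f.leadingCoeff * p.leadingCoeff = 0 := by
  rw [← coeff_mul_degree_add_degree, h, coeff_zero]

theorem exists_natDegree_minimal_right_annihilator {S : Type*} [Semiring S] {f g : S[X]}
    (hg : g ≠ 0) (hfg : f * g = 0) :
    ∃ p : S[X], p ≠ 0 ∧ f * p = 0 ∧
      ∀ q : S[X], q ≠ 0 → f * q = 0 → p.natDegree ≤ q.natDegree := by
  obtain ⟨p, ⟨hp0, hfp⟩, hmin⟩ :=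
    (measure natDegree).wf.has_min {q : S[X] | q ≠ 0 ∧ f * q = 0} ⟨g, hg, hfg⟩
  exact ⟨p, hp0, hfp, fun q hq0 hfq => not_lt.mp (hmin q ⟨hq0, hfq⟩)⟩

variable {R : Type*} [Ring R]

theorem C_leadingCoeff_mul_eq_zero_of_minimal (hS : IsSemicommutativeRing R[X]) {F p f : R[X]}
    (hFp : F * p = 0) (hmin : ∀ q : R[X], q ≠ 0 → F * q = 0 → p.natDegree ≤ q.natDegree)
    (hf : f * p = 0) : C f.leadingCoeff * p = 0 := by
  set q := C f.leadingCoeff * p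
  have hFq : F * q = 0 := by rw [← mul_assoc]; exact hS F p hFp _
  by_contra hq0
  have hdeg : q.natDegree = p.natDegree :=
    le_antisymm (natDegree_C_mul_le _ _) (hmin q hq0 hFq)
  apply leadingCoeff_ne_zero.mpr hq0
  rw [leadingCoeff, hdeg, coeff_C_mul]
  exact leadingCoeff_mul_leadingCoeff_eq_zero hf

theorem mul_C_leadingCoeff_eq_zero_of_minimal (hS : IsSemicommutativeRing R[X]) {F p f : R[X]}
    (hFp : F * p = 0) (hmin : ∀ q : R[X], q ≠ 0 → F * q = 0 → p.natDegree ≤ q.natDegree)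
    (hf : f * p = 0) : f * C p.leadingCoeff = 0 := by
  by_cases hf0 : f = 0
  · rw [hf0, zero_mul]
  have hlead : C f.leadingCoeff * p = 0 := C_leadingCoeff_mul_eq_zero_of_minimal hS hFp hmin hf
  have herase : f.eraseLead * p = 0 := by
    rw [← self_sub_C_mul_X_pow, sub_mul, hf, mul_assoc, X_pow_mul, ← mul_assoc, hlead,
      zero_mul, sub_zero]
  have ih := mul_C_leadingCoeff_eq_zero_of_minimal hS hFp hmin herase
  rw [← eraseLead_add_C_mul_X_pow f, add_mul, ih, mul_assoc, X_pow_mul, ← mul_assoc, ← C_mul,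
    leadingCoeff_mul_leadingCoeff_eq_zero hf, C_0, zero_mul, zero_add]
termination_by f.support.card
decreasing_by exact eraseLead_support_card_lt hf0

end Polynomial

/-- If the polynomial ring `R[x]` is semicommutative, then `R` is right McCoy. -/
theorem rightMcCoy_of_semicommutative_polynomial
    (R : Type*) [Ring R] (h : IsSemicommutativeRing (Polynomial R)) :
    IsRightMcCoyRing R := by
  intro f g _ hg hfg
  obtain ⟨p, hp0, hfp, hmin⟩ := exists_natDegree_minimal_right_annihilator hg hfg
  exact ⟨p.leadingCoeff, leadingCoeff_ne_zero.mpr hp0,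
    mul_C_leadingCoeff_eq_zero_of_minimal h hfp hmin hfp⟩
end

section
/- Let R be a semicommutative ring. If the polynomial ring R[x] is quasi-Baer, then R is quasi-Baer. (This is the σ = id instance of the paper's proposition: if R is σ-semicommutative and R[x;σ] is quasi-Baer then R is quasi-Baer.) -/
/-- A right ideal of a possibly noncommutative ring: an additive subgroup closed under
right multiplication by arbitrary ring elements. -/
def IsRightIdeal {S : Type*} [Ring S] (I : Set S) : Prop :=
  (0 : S) ∈ I ∧ (∀ a ∈ I, ∀ b ∈ I, a + b ∈ I) ∧ (∀ a ∈ I, -a ∈ I) ∧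
    (∀ a ∈ I, ∀ s : S, a * s ∈ I)

/-- A ring is quasi-Baer if the right annihilator of every right ideal equals `eS` for
some idempotent `e`. -/
def IsQuasiBaerRing (S : Type*) [Ring S] : Prop :=
  ∀ I : Set S, IsRightIdeal I →
    ∃ e : S, e * e = e ∧ {c : S | ∀ a ∈ I, a * c = 0} = {x : S | ∃ r : S, x = e * r}

/-!
If `r(J) = e R[x]` for the right ideal `J = I[x]` of polynomials with coefficients in `I`,
then taking constant terms gives `r(I) = e₀ R` with `e₀ = e(0)` idempotent: a constant `c`
annihilates `I` exactly when `C c` annihilates `I[x]`, and every coefficient of an element of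
`r(I[x])` annihilates `I` because `I[x]` contains the constants `C a`, `a ∈ I`.
-/

open Polynomial

def rightAnnihilator {S : Type*} [MulZeroClass S] (I : Set S) : Set S :=
  {c | ∀ a ∈ I, a * c = 0}

/-- `I[x]`: the polynomials all of whose coefficients lie in `I`. -/
def coeffwiseSet {R : Type*} [Semiring R] (I : Set R) : Set R[X] :=
  {f | ∀ k, f.coeff k ∈ I}

theorem IsRightIdeal.coeffwiseSet {R : Type*} [Ring R] {I : Set R} (hI : IsRightIdeal I) :
    IsRightIdeal (coeffwiseSet I) := by
  obtain ⟨hzero, hadd, hneg, hmul⟩ := hI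
  refine ⟨fun k => by simpa using hzero,
    fun f hf g hg k => by simpa using hadd _ (hf k) _ (hg k),
    fun f hf k => by simpa using hneg _ (hf k),
    fun f hf g k => ?_⟩
  rw [coeff_mul]
  exact Finset.sum_induction _ (· ∈ I) (fun x y hx hy => hadd _ hx _ hy) hzero
    fun p _ => hmul _ (hf p.1) _

section

variable {R : Type*} [Semiring R] {I : Set R}

theorem C_mem_coeffwiseSet (hzero : (0 : R) ∈ I) {a : R} (ha : a ∈ I) :
    C a ∈ coeffwiseSet I := by
  intro k
  rw [coeff_C]
  split_ifs
  exacts [ha, hzero]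

theorem C_mem_rightAnnihilator_coeffwiseSet {c : R} (hc : c ∈ rightAnnihilator I) :
    C c ∈ rightAnnihilator (coeffwiseSet I) := by
  intro f hf
  ext k
  rw [coeff_mul_C, hc _ (hf k), coeff_zero]

theorem coeff_mem_rightAnnihilator (hzero : (0 : R) ∈ I) {g : R[X]}
    (hg : g ∈ rightAnnihilator (coeffwiseSet I)) (k : ℕ) :
    g.coeff k ∈ rightAnnihilator I := by
  intro a ha
  simpa [coeff_C_mul] using congrArg (coeff · k) (hg _ (C_mem_coeffwiseSet hzero ha))

theorem rightAnnihilator_eq_image_constantCoeff (hzero : (0 : R) ∈ I) :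
    rightAnnihilator I = constantCoeff '' rightAnnihilator (coeffwiseSet I) := by
  ext c
  refine ⟨fun hc => ⟨C c, C_mem_rightAnnihilator_coeffwiseSet hc, coeff_C_zero⟩, ?_⟩
  rintro ⟨g, hg, rfl⟩
  exact coeff_mem_rightAnnihilator hzero hg 0

end

theorem image_principalRightIdeal_of_surjective {S T F : Type*} [Mul S] [Mul T] [FunLike F S T]
    [MulHomClass F S T] {φ : F} (hφ : Function.Surjective φ) (e : S) :
    φ '' {x | ∃ r, x = e * r} = {y | ∃ r, y = φ e * r} := by
  ext y
  constructor
  · rintro ⟨_, ⟨r, rfl⟩, rfl⟩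
    exact ⟨φ r, map_mul φ e r⟩
  · rintro ⟨t, rfl⟩
    obtain ⟨r, rfl⟩ := hφ t
    exact ⟨e * r, ⟨r, rfl⟩, map_mul φ e r⟩

theorem quasiBaer_of_quasiBaer_polynomial_general
    (R : Type*) [Ring R]
    (hqb : IsQuasiBaerRing (Polynomial R)) :
    IsQuasiBaerRing R := by
  intro I hI
  obtain ⟨e, he, hann⟩ := hqb _ hI.coeffwiseSet
  refine ⟨constantCoeff e, by rw [← map_mul, he], ?_⟩
  calc rightAnnihilator I
      = constantCoeff '' rightAnnihilator (coeffwiseSet I) :=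
        rightAnnihilator_eq_image_constantCoeff hI.1
    _ = constantCoeff '' {x | ∃ r, x = e * r} := congrArg _ hann
    _ = _ := image_principalRightIdeal_of_surjective constantCoeff_surjective e

/-- If `R` is semicommutative and `R[x]` is quasi-Baer, then `R` is quasi-Baer. -/
theorem quasiBaer_of_quasiBaer_polynomial
    (R : Type*) [Ring R] (hsc : IsSemicommutativeRing R)
    (hqb : IsQuasiBaerRing (Polynomial R)) :
    IsQuasiBaerRing R :=
  quasiBaer_of_quasiBaer_polynomial_general R hqb
end

section
/- Let R be a ring and σ a ring endomorphism of R. Suppose R is semicommutative and satisfies the condition (C_σ^2): for all a, b ∈ R, a·σ(b)·b = 0 implies a·σ(b) = 0. Then R is σ-skew McCoy: for any n, m ∈ ℕ and coefficients a_0, …, a_n ∈ R (not all zero) and b_0, …, b_m ∈ R (not all zero), if Σ_{i+j=k} a_i·σ^i(b_j) = 0 for every k (i.e. (Σ_i a_i x^i)(Σ_j b_j x^j) = 0 in the skew polynomial ring R[x;σ]), then there exists a nonzero c ∈ R with a_i·σ^i(c) = 0 for all i (i.e. (Σ_i a_i x^i)·c = 0 in R[x;σ]). -/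
/-!
Semicommutativity together with `(C_σ^2)` gives `x * y = 0 → x * σ y = 0` (from `x * σ y * y = 0`),
hence `x * σ^[i] y = 0 → x * σ^[j] y = 0` for `i ≤ j`. One then shows that every term
`a i * σ^[i] (b j)` of the product vanishes, by induction on `i + j` and, within the antidiagonal
`i + j = k`, on `j`. For `i = 0` the `k`-th coefficient reduces to the term itself. For `i ≥ 1`,
right-multiply the `k`-th coefficient by `c = σ^[i-1] (b j)`: the terms with larger `j'` have
`i' < i`, and `a i' * σ^[i'] (b j) = 0` lies on an earlier antidiagonal, so `a i' * c = 0` and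
semicommutativity kills them. What remains is `a i * σ c * c = 0`, and `(C_σ^2)` concludes.
Any nonzero `b j` is then a witness.
-/

open Finset

section

variable {R : Type*} [Ring R]

theorem Finset.mul_eq_zero_of_sum_eq_zero {ι : Type*} {s : Finset ι} {f : ι → R}
    (hsum : ∑ x ∈ s, f x = 0) {x₀ : ι} (hx₀ : x₀ ∈ s) (c : R)
    (hrest : ∀ x ∈ s, x ≠ x₀ → f x * c = 0) : f x₀ * c = 0 := by
  rw [← Finset.sum_eq_single_of_mem x₀ hx₀ hrest, ← Finset.sum_mul, hsum, zero_mul]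

variable (σ : R →+* R)

theorem mul_map_eq_zero_of_semicommutative_C2
    (hsemi : ∀ a b : R, a * b = 0 → ∀ r : R, a * r * b = 0)
    (hC2 : ∀ a b : R, a * σ b * b = 0 → a * σ b = 0) {x y : R} (h : x * y = 0) :
    x * σ y = 0 :=
  hC2 x y (hsemi x y h (σ y))

variable {σ}

theorem mul_iterate_eq_zero_of_le (hσ : ∀ x y : R, x * y = 0 → x * σ y = 0)
    {x y : R} {i j : ℕ} (hij : i ≤ j) (h : x * σ^[i] y = 0) : x * σ^[j] y = 0 := by
  obtain ⟨d, rfl⟩ := Nat.exists_eq_add_of_le hij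
  induction d with
  | zero => exact h
  | succ d ih =>
    rw [← add_assoc, Function.iterate_succ_apply']
    exact hσ _ _ (ih (Nat.le_add_right i d))

theorem mul_iterate_eq_zero_of_antidiagonal_step
    (hsemi : ∀ a b : R, a * b = 0 → ∀ r : R, a * r * b = 0)
    (hC2 : ∀ a b : R, a * σ b * b = 0 → a * σ b = 0) {a b : ℕ → R} {k : ℕ}
    (hk : ∑ ij ∈ antidiagonal k, a ij.1 * σ^[ij.1] (b ij.2) = 0)
    (hbelow : ∀ i j, i + j < k → a i * σ^[i] (b j) = 0) {i j : ℕ}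
    (hbefore : ∀ i' j', i' + j' = k → j' < j → a i' * σ^[i'] (b j') = 0) (hij : i + j = k) :
    a i * σ^[i] (b j) = 0 := by
  have hmem : (i, j) ∈ antidiagonal k := mem_antidiagonal.2 hij
  cases i with
  | zero =>
    simpa using mul_eq_zero_of_sum_eq_zero hk hmem 1 fun p hp hne => by
      have hp : p.1 + p.2 = k := mem_antidiagonal.1 hp
      rw [hbefore p.1 p.2 hp (by grind), zero_mul]
  | succ i =>
    set c := σ^[i] (b j)
    have hσ : ∀ x y : R, x * y = 0 → x * σ y = 0 := fun _ _ =>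
      mul_map_eq_zero_of_semicommutative_C2 σ hsemi hC2
    have hcancel := mul_eq_zero_of_sum_eq_zero hk hmem c fun p hp hne => by
      have hp : p.1 + p.2 = k := mem_antidiagonal.1 hp
      rcases lt_or_gt_of_ne (show p.2 ≠ j by grind) with hjlt | hjgt
      · rw [hbefore p.1 p.2 hp hjlt, zero_mul]
      · have hac : a p.1 * c = 0 :=
          mul_iterate_eq_zero_of_le hσ (by omega) (hbelow p.1 j (by omega))
        simpa [mul_assoc] using hsemi _ _ hac (σ^[p.1] (b p.2))
    rw [Function.iterate_succ_apply'] at hcancel ⊢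
    exact hC2 _ _ hcancel

theorem mul_iterate_eq_zero_of_skew_mul_eq_zero
    (hsemi : ∀ a b : R, a * b = 0 → ∀ r : R, a * r * b = 0)
    (hC2 : ∀ a b : R, a * σ b * b = 0 → a * σ b = 0) {a b : ℕ → R}
    (hmul : ∀ k : ℕ, ∑ ij ∈ antidiagonal k, a ij.1 * σ^[ij.1] (b ij.2) = 0) (i j : ℕ) :
    a i * σ^[i] (b j) = 0 := by
  suffices ∀ k j i, i + j = k → a i * σ^[i] (b j) = 0 from this _ j i rfl
  intro k
  induction k using Nat.strong_induction_on with
  | _ k ihk =>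
    intro j
    induction j using Nat.strong_induction_on with
    | _ j ihj =>
      exact fun i => mul_iterate_eq_zero_of_antidiagonal_step hsemi hC2 (hmul k)
        (fun i' j' h => ihk _ h j' i' rfl) fun i' j' h hj => ihj j' hj i' h

end

theorem sigmaSkewMcCoy_of_semicommutative_C2_general
    (R : Type*) [Ring R] (σ : R →+* R)
    (hsemi : ∀ a b : R, a * b = 0 → ∀ r : R, a * r * b = 0)
    (hC2 : ∀ a b : R, a * σ b * b = 0 → a * σ b = 0)
    (a b : ℕ → R)
    (hbne : ∃ j, b j ≠ 0)
    (hmul : ∀ k : ℕ, ∑ ij ∈ Finset.HasAntidiagonal.antidiagonal k, a ij.1 * (⇑σ)^[ij.1] (b ij.2) = 0) :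
    ∃ c : R, c ≠ 0 ∧ ∀ i, a i * (⇑σ)^[i] c = 0 := by
  obtain ⟨j, hj⟩ := hbne
  exact ⟨b j, hj, fun i => mul_iterate_eq_zero_of_skew_mul_eq_zero hsemi hC2 hmul i j⟩

/-- If `R` is a semicommutative ring satisfying the condition `(C_σ^2)`
(`a * σ b * b = 0` implies `a * σ b = 0`), then `R` is `σ`-skew McCoy.
Skew polynomials over `R[x;σ]` are encoded by their coefficient sequences: the `k`-th
coefficient of a product is `∑_{i+j=k} a i * σ^[i] (b j)`, and the coefficients of
`p(x) * c` are `a i * σ^[i] c`. -/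
theorem sigmaSkewMcCoy_of_semicommutative_C2
    (R : Type*) [Ring R] (σ : R →+* R)
    (hsemi : ∀ a b : R, a * b = 0 → ∀ r : R, a * r * b = 0)
    (hC2 : ∀ a b : R, a * σ b * b = 0 → a * σ b = 0)
    (n m : ℕ) (a b : ℕ → R)
    (ha : ∀ i, n < i → a i = 0) (hb : ∀ j, m < j → b j = 0)
    (hane : ∃ i, a i ≠ 0) (hbne : ∃ j, b j ≠ 0)
    (hmul : ∀ k : ℕ, ∑ ij ∈ Finset.HasAntidiagonal.antidiagonal k, a ij.1 * (⇑σ)^[ij.1] (b ij.2) = 0) :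
    ∃ c : R, c ≠ 0 ∧ ∀ i, a i * (⇑σ)^[i] c = 0 :=
  sigmaSkewMcCoy_of_semicommutative_C2_general R σ hsemi hC2 a b hbne hmul
end

section
/- Let R be a ring and σ a ring endomorphism of R. Suppose R is reduced and right σ-reversible. Then R is σ-skew McCoy: for any n, m ∈ ℕ and coefficients a_0, …, a_n ∈ R (not all zero) and b_0, …, b_m ∈ R (not all zero), if Σ_{i+j=k} a_i·σ^i(b_j) = 0 for every k (i.e. (Σ_i a_i x^i)(Σ_j b_j x^j) = 0 in the skew polynomial ring R[x;σ]), then there exists a nonzero c ∈ R with a_i·σ^i(c) = 0 for all i (i.e. (Σ_i a_i x^i)·c = 0 in R[x;σ]). -/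
/-!
In a reduced ring `a * b = 0` forces `b * a = 0` and `a * r * b = 0`, so right `σ`-reversibility
gives `a * σ b = 0`: a zero product stays zero when `σ` is applied to its right factor. Then
every term `a i * σ^[i] (b j)` of the product vanishes, by induction on `i + j` and, on a fixed
antidiagonal, on `j`: multiplying the coefficient equation on the right by `σ^[i] (b j)` kills
all the other terms, leaving `a i * σ^[i] (b j) * σ^[i] (b j) = 0`. Hence any nonzero `b j`
is a witness `c`.
-/

open Finset.HasAntidiagonal

namespace IsReduced

variable {M₀ : Type*} [MonoidWithZero M₀] [IsReduced M₀] {a b : M₀}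

theorem mul_eq_zero_symm (h : a * b = 0) : b * a = 0 :=
  IsNilpotent.eq_zero ⟨2, by rw [sq, mul_assoc, ← mul_assoc a, h, zero_mul, mul_zero]⟩

theorem mul_mul_eq_zero (h : a * b = 0) (r : M₀) : a * r * b = 0 :=
  IsNilpotent.eq_zero ⟨2, by
    rw [sq, mul_assoc, ← mul_assoc b, ← mul_assoc b, mul_eq_zero_symm h, zero_mul, zero_mul,
      mul_zero]⟩

theorem mul_eq_zero_of_mul_mul_self_eq_zero (h : a * b * b = 0) : a * b = 0 :=
  IsNilpotent.eq_zero ⟨2, by rw [sq, mul_assoc, mul_eq_zero_symm h, mul_zero]⟩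

end IsReduced

section RightReversible

variable {R : Type*} [Semiring R] [IsReduced R] (σ : R → R)

theorem mul_iterate_eq_zero_of_mul_eq_zero (hrev : ∀ a b : R, a * b = 0 → b * σ a = 0)
    {a b : R} (h : a * b = 0) (t : ℕ) : a * σ^[t] b = 0 := by
  induction t with
  | zero => exact h
  | succ t ih =>
    rw [Function.iterate_succ_apply']
    exact hrev _ _ (IsReduced.mul_eq_zero_symm ih)

theorem mul_iterate_eq_zero_of_le_s6 (hrev : ∀ a b : R, a * b = 0 → b * σ a = 0)
    {a c : R} {i' i : ℕ} (hle : i' ≤ i) (h : a * σ^[i'] c = 0) : a * σ^[i] c = 0 := by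
  rw [← Nat.sub_add_cancel hle, Function.iterate_add_apply]
  exact mul_iterate_eq_zero_of_mul_eq_zero σ hrev h (i - i')

theorem skewMul_term_eq_zero_of_lower (hrev : ∀ a b : R, a * b = 0 → b * σ a = 0)
    {a b : ℕ → R} {k : ℕ} (hk : ∑ ij ∈ antidiagonal k, a ij.1 * σ^[ij.1] (b ij.2) = 0)
    (hlower : ∀ i j, i + j < k → a i * σ^[i] (b j) = 0)
    {i j : ℕ} (hij : i + j = k)
    (hprev : ∀ i' j', i' + j' = k → j' < j → a i' * σ^[i'] (b j') = 0) :
    a i * σ^[i] (b j) = 0 := by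
  set y := σ^[i] (b j)
  have hother : ∀ p ∈ antidiagonal k, p ≠ (i, j) → a p.1 * σ^[p.1] (b p.2) * y = 0 := by
    rintro ⟨i', j'⟩ hp hne
    rw [mem_antidiagonal] at hp
    rcases lt_trichotomy j' j with hlt | rfl | hgt
    · rw [hprev i' j' hp hlt, zero_mul]
    · exact absurd (by congr; omega) hne
    · have hi' : a i' * y = 0 :=
        mul_iterate_eq_zero_of_le_s6 σ hrev (by omega) (hlower i' j (by omega))
      exact IsReduced.mul_mul_eq_zero hi' _
  have hsq : a i * y * y = 0 := by
    rw [← Finset.sum_eq_single_of_mem (i, j) (mem_antidiagonal.2 hij) hother,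
      ← Finset.sum_mul, hk, zero_mul]
  exact IsReduced.mul_eq_zero_of_mul_mul_self_eq_zero hsq

theorem skewMul_term_eq_zero (hrev : ∀ a b : R, a * b = 0 → b * σ a = 0) {a b : ℕ → R}
    (hmul : ∀ k, ∑ ij ∈ antidiagonal k, a ij.1 * σ^[ij.1] (b ij.2) = 0) (i j : ℕ) :
    a i * σ^[i] (b j) = 0 := by
  suffices ∀ k j i, i + j = k → a i * σ^[i] (b j) = 0 from this _ j i rfl
  intro k
  induction k using Nat.strong_induction_on with
  | _ k ihk =>
    intro j
    induction j using Nat.strong_induction_on with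
    | _ j ihj =>
      intro i hij
      exact skewMul_term_eq_zero_of_lower σ hrev (hmul k)
        (fun i' j' hlt => ihk _ hlt j' i' rfl) hij (fun i' j' hk hlt => ihj j' hlt i' hk)

end RightReversible

theorem sigmaSkewMcCoy_of_reduced_rightSigmaReversible_general
    (R : Type*) [Ring R] [IsReduced R] (σ : R →+* R)
    (hrev : ∀ a b : R, a * b = 0 → b * σ a = 0)
    (a b : ℕ → R)
    (hbne : ∃ j, b j ≠ 0)
    (hmul : ∀ k : ℕ, ∑ ij ∈ Finset.HasAntidiagonal.antidiagonal k, a ij.1 * (⇑σ)^[ij.1] (b ij.2) = 0) :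
    ∃ c : R, c ≠ 0 ∧ ∀ i, a i * (⇑σ)^[i] c = 0 := by
  obtain ⟨j, hj⟩ := hbne
  exact ⟨b j, hj, fun i => skewMul_term_eq_zero σ hrev hmul i j⟩

/-- If `R` is a reduced, right `σ`-reversible ring (`a * b = 0` implies `b * σ a = 0`),
then `R` is `σ`-skew McCoy.
Skew polynomials over `R[x;σ]` are encoded by their coefficient sequences: the `k`-th
coefficient of a product is `∑_{i+j=k} a i * σ^[i] (b j)`, and the coefficients of
`p(x) * c` are `a i * σ^[i] c`. -/
theorem sigmaSkewMcCoy_of_reduced_rightSigmaReversible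
    (R : Type*) [Ring R] [IsReduced R] (σ : R →+* R)
    (hrev : ∀ a b : R, a * b = 0 → b * σ a = 0)
    (n m : ℕ) (a b : ℕ → R)
    (ha : ∀ i, n < i → a i = 0) (hb : ∀ j, m < j → b j = 0)
    (hane : ∃ i, a i ≠ 0) (hbne : ∃ j, b j ≠ 0)
    (hmul : ∀ k : ℕ, ∑ ij ∈ Finset.HasAntidiagonal.antidiagonal k, a ij.1 * (⇑σ)^[ij.1] (b ij.2) = 0) :
    ∃ c : R, c ≠ 0 ∧ ∀ i, a i * (⇑σ)^[i] c = 0 :=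
  sigmaSkewMcCoy_of_reduced_rightSigmaReversible_general R σ hrev a b hbne hmul
end

section
/- Let R = (ℤ/2ℤ) × (ℤ/2ℤ) and let σ : R → R be the ring endomorphism σ(a,b) = (b,a). Then R is not σ-skew McCoy: the polynomials p(x) = (1,0) + (1,0)x and q(x) = (0,1) + (1,0)x in R[x;σ] are nonzero and satisfy p(x)q(x) = 0 (i.e. the skew convolutions Σ_{i+j=k} a_i·σ^i(b_j) vanish for all k, where a_0 = a_1 = (1,0), b_0 = (0,1), b_1 = (1,0)), yet there is no nonzero c ∈ R with a_0·c = 0 and a_1·σ(c) = 0 (i.e. with p(x)c = 0 in R[x;σ]). -/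
/-- The swap endomorphism `σ(a, b) = (b, a)` of `ℤ/2 × ℤ/2`. -/
def swapHom : ZMod 2 × ZMod 2 →+* ZMod 2 × ZMod 2 :=
  (RingHom.snd (ZMod 2) (ZMod 2)).prod (RingHom.fst (ZMod 2) (ZMod 2))

/-- The coefficients of `p(x) = (1,0) + (1,0)x`. -/
def pCoeff : ℕ → ZMod 2 × ZMod 2 := fun i => if i ≤ 1 then (1, 0) else 0

/-- The coefficients of `q(x) = (0,1) + (1,0)x`. -/
def qCoeff : ℕ → ZMod 2 × ZMod 2 := fun j =>
  if j = 0 then (0, 1) else if j = 1 then (1, 0) else 0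

theorem skewConvolution_eq_zero_of_degree_lt {R : Type*} [Semiring R] (σ : R →+* R)
    {a b : ℕ → R} {m n k : ℕ} (ha : ∀ i, m < i → a i = 0) (hb : ∀ j, n < j → b j = 0)
    (hk : m + n < k) :
    ∑ ij ∈ Finset.HasAntidiagonal.antidiagonal k, a ij.1 * σ^[ij.1] (b ij.2) = 0 := by
  refine Finset.sum_eq_zero fun ij hij => ?_
  rw [Finset.HasAntidiagonal.mem_antidiagonal] at hij
  rcases lt_or_ge m ij.1 with hi | hi
  · rw [ha _ hi, zero_mul]
  · rw [hb _ (by omega), Function.iterate_fixed (map_zero σ), mul_zero]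

theorem Prod.fst_eq_zero_of_one_zero_mul_eq_zero {R S : Type*} [Semiring R] [Semiring S]
    {c : R × S} (h : ((1, 0) : R × S) * c = 0) : c.1 = 0 := by
  simpa using congrArg Prod.fst h

theorem pCoeff_eq_zero {i : ℕ} (hi : 1 < i) : pCoeff i = 0 :=
  if_neg (by omega)

theorem qCoeff_eq_zero {j : ℕ} (hj : 1 < j) : qCoeff j = 0 := by
  simp only [qCoeff, if_neg (show j ≠ 0 by omega), if_neg (show j ≠ 1 by omega)]

/-- `R = ℤ/2 × ℤ/2` with the swap endomorphism `σ` is not `σ`-skew McCoy: the nonzero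
skew polynomials `p(x) = (1,0) + (1,0)x` and `q(x) = (0,1) + (1,0)x` of `R[x;σ]` satisfy
`p(x)q(x) = 0`, but there is no nonzero `c ∈ R` with `p(x)c = 0`.
Skew polynomials are encoded by their coefficient sequences: the `k`-th coefficient of a
product is `∑_{i+j=k} a i * σ^[i] (b j)`, and the coefficients of `p(x) * c` are
`a i * σ^[i] c`. -/
theorem zmod2_sq_not_sigmaSkewMcCoy :
    (∃ i, pCoeff i ≠ 0) ∧ (∃ j, qCoeff j ≠ 0) ∧
    (∀ k : ℕ, ∑ ij ∈ Finset.HasAntidiagonal.antidiagonal k,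
        pCoeff ij.1 * (⇑swapHom)^[ij.1] (qCoeff ij.2) = 0) ∧
    ¬ ∃ c : ZMod 2 × ZMod 2, c ≠ 0 ∧ ∀ i, pCoeff i * (⇑swapHom)^[i] c = 0 := by
  refine ⟨⟨0, by decide⟩, ⟨0, by decide⟩, fun k => ?_, ?_⟩
  · rcases le_or_gt k 2 with hk | hk
    · -- for `k = 1` the two terms are both `(1, 0)` and cancel in characteristic 2
      interval_cases k <;> decide
    · exact skewConvolution_eq_zero_of_degree_lt swapHom (fun _ => pCoeff_eq_zero)
        (fun _ => qCoeff_eq_zero) hk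
  · rintro ⟨c, hc, hpc⟩
    have hc₁ : c.1 = 0 := Prod.fst_eq_zero_of_one_zero_mul_eq_zero (hpc 0)
    -- `σ` moves the second coordinate of `c` into the first one.
    have hc₂ : c.2 = 0 := Prod.fst_eq_zero_of_one_zero_mul_eq_zero (hpc 1)
    exact hc (Prod.ext hc₁ hc₂)
end

section
/- Let R be a commutative domain, σ a ring endomorphism of R, and M an R-module. Then the Nagata extension R⊕_σM is an Armendariz ring if and only if M is an Armendariz module. -/
/-!
Write `S = R ⊕_σ M` and, for `P ∈ S[X]`, let `P₁ ∈ R[X]` and `P₂ ∈ M[X]` be its components.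
Then `(PQ)₁ = P₁ Q₁` and `(PQ)₂ = σ(P₁) Q₂ + Q₁ P₂`. If `m(x) f(x) = 0` in `M[x]`, the
polynomials `(0, m)` and `(f, 0)` multiply to zero in `S[X]`, and the products of their
coefficients are `(0, f_j m_i)`. Conversely, if `PQ = 0` then `P₁ Q₁ = 0` in the domain
`R[X]`, so `P₁ = 0` or `Q₁ = 0`; the second component then reads `Q₁ P₂ = 0`, resp.
`σ(P₁) Q₂ = 0`, and the module Armendariz property kills the coefficient products.
-/

/-- The Nagata extension `R ⊕_σ M` of a commutative ring `R` by an `R`-module `M` along a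
ring endomorphism `σ` of `R`: the underlying additive group is `R × M`, with multiplication
`(a, m) * (b, n) = (a * b, σ a • n + b • m)`. -/
@[nolint unusedArguments]
def Nagata (R : Type*) [CommRing R] (σ : R →+* R) (M : Type*)
    [AddCommGroup M] [Module R M] : Type _ := R × M

namespace Nagata

variable {R : Type*} [CommRing R] {σ : R →+* R} {M : Type*} [AddCommGroup M] [Module R M]

instance : AddCommGroup (Nagata R σ M) := inferInstanceAs (AddCommGroup (R × M))

/-- The element `(a, m)` of the Nagata extension. -/
def mk (a : R) (m : M) : Nagata R σ M := (a, m)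

instance : Ring (Nagata R σ M) where
  __ := (inferInstance : AddCommGroup (Nagata R σ M))
  mul x y := (x.1 * y.1, σ x.1 • y.2 + y.1 • x.2)
  one := ((1 : R), (0 : M))
  left_distrib x y z := by
    refine Prod.ext ?_ ?_
    · show x.1 * (y.1 + z.1) = x.1 * y.1 + x.1 * z.1; ring
    · show σ x.1 • (y.2 + z.2) + (y.1 + z.1) • x.2
          = (σ x.1 • y.2 + y.1 • x.2) + (σ x.1 • z.2 + z.1 • x.2)
      rw [smul_add, add_smul]; abel
  right_distrib x y z := by
    refine Prod.ext ?_ ?_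
    · show (x.1 + y.1) * z.1 = x.1 * z.1 + y.1 * z.1; ring
    · show σ (x.1 + y.1) • z.2 + z.1 • (x.2 + y.2)
          = (σ x.1 • z.2 + z.1 • x.2) + (σ y.1 • z.2 + z.1 • y.2)
      rw [map_add, add_smul, smul_add]; abel
  zero_mul x := by
    refine Prod.ext ?_ ?_
    · show (0 : R) * x.1 = 0; ring
    · show σ (0 : R) • x.2 + x.1 • (0 : M) = 0; simp
  mul_zero x := by
    refine Prod.ext ?_ ?_
    · show x.1 * (0 : R) = 0; ring
    · show σ x.1 • (0 : M) + (0 : R) • x.2 = 0; simp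
  mul_assoc x y z := by
    refine Prod.ext ?_ ?_
    · show x.1 * y.1 * z.1 = x.1 * (y.1 * z.1); ring
    · show σ (x.1 * y.1) • z.2 + z.1 • (σ x.1 • y.2 + y.1 • x.2)
          = σ x.1 • (σ y.1 • z.2 + z.1 • y.2) + (y.1 * z.1) • x.2
      rw [map_mul, mul_smul, smul_add, smul_add, mul_smul, smul_comm z.1 (σ x.1),
        smul_comm z.1 y.1]
      abel
  one_mul x := by
    refine Prod.ext ?_ ?_
    · show 1 * x.1 = x.1; ring
    · show σ 1 • x.2 + x.1 • (0 : M) = x.2; simp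
  mul_one x := by
    refine Prod.ext ?_ ?_
    · show x.1 * 1 = x.1; ring
    · show σ x.1 • (0 : M) + (1 : R) • x.2 = x.2; simp

end Nagata

/-- A ring `S` is Armendariz if whenever polynomials over it satisfy `f * g = 0`, all
products of their coefficients vanish. -/
def IsArmendarizRing (S : Type*) [Ring S] : Prop :=
  ∀ f g : Polynomial S, f * g = 0 → ∀ i j, f.coeff i * g.coeff j = 0

/-- An `R`-module `M` is Armendariz if whenever `m(x) f(x) = 0` in the `R[x]`-module
`M[x]`, all the products `a_j • m_i` of coefficients vanish. -/
def IsArmendarizModule (R M : Type*) [CommRing R] [AddCommGroup M] [Module R M] : Prop :=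
  ∀ (m : PolynomialModule R M) (f : Polynomial R), f • m = 0 → ∀ i j, f.coeff j • m.coeff i = 0

open Polynomial

namespace Nagata

variable {R : Type*} [CommRing R] {σ : R →+* R} {M : Type*} [AddCommGroup M] [Module R M]

theorem fst_mul (x y : Nagata R σ M) : (x * y).1 = x.1 * y.1 := rfl

theorem snd_mul (x y : Nagata R σ M) : (x * y).2 = σ x.1 • y.2 + y.1 • x.2 := rfl

theorem mul_of_fst_eq_zero_left {x : Nagata R σ M} (hx : x.1 = 0) (y : Nagata R σ M) :
    x * y = mk 0 (y.1 • x.2) := by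
  refine Prod.ext ?_ ?_
  · rw [fst_mul, hx, zero_mul]; rfl
  · rw [snd_mul, hx, map_zero, zero_smul, zero_add]; rfl

theorem mul_of_fst_eq_zero_right (x : Nagata R σ M) {y : Nagata R σ M} (hy : y.1 = 0) :
    x * y = mk 0 (σ x.1 • y.2) := by
  refine Prod.ext ?_ ?_
  · rw [fst_mul, hy, mul_zero]; rfl
  · rw [snd_mul, hy, zero_smul, add_zero]; rfl

theorem mk_zero_eq_zero_iff {m : M} : (mk 0 m : Nagata R σ M) = 0 ↔ m = 0 :=
  ⟨congrArg Prod.snd, fun h => h ▸ rfl⟩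

variable (σ M) in
def fstHom : Nagata R σ M →+* R where
  toFun x := x.1
  map_one' := rfl
  map_mul' _ _ := rfl
  map_zero' := rfl
  map_add' _ _ := rfl

variable (σ M) in
def inl : R →+* Nagata R σ M where
  toFun a := mk a 0
  map_one' := rfl
  map_mul' a b := Prod.ext rfl (by rw [snd_mul]; simp [mk])
  map_zero' := rfl
  map_add' a b := Prod.ext rfl (add_zero 0).symm

@[simp] theorem fstHom_apply (x : Nagata R σ M) : fstHom σ M x = x.1 := rfl

theorem fstHom_comp_inl : (fstHom σ M).comp (inl σ M) = RingHom.id R := rfl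

noncomputable def sndPoly (P : (Nagata R σ M)[X]) : PolynomialModule R M :=
  .ofCoeff R (P.toFinsupp.coeff.mapRange Prod.snd rfl)

noncomputable def inrPoly (m : PolynomialModule R M) : (Nagata R σ M)[X] :=
  .ofFinsupp (.ofCoeff (m.coeff.mapRange (mk 0) rfl))

@[simp] theorem coeff_sndPoly (P : (Nagata R σ M)[X]) (k : ℕ) :
    (sndPoly P).coeff k = (P.coeff k).2 := rfl

@[simp] theorem coeff_inrPoly (m : PolynomialModule R M) (k : ℕ) :
    (inrPoly m : (Nagata R σ M)[X]).coeff k = mk 0 (m.coeff k) := rfl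

theorem eq_zero_iff_map_fstHom_and_sndPoly (P : (Nagata R σ M)[X]) :
    P = 0 ↔ P.map (fstHom σ M) = 0 ∧ sndPoly P = 0 := by
  simp only [Polynomial.ext_iff, coeff_map, coeff_zero, fstHom_apply,
    ← PolynomialModule.coeff_inj, Finsupp.ext_iff, coeff_sndPoly, PolynomialModule.coeff_zero,
    Finsupp.coe_zero, Pi.zero_apply, ← forall_and]
  exact forall_congr' fun k => Prod.ext_iff

theorem sndPoly_mul (P Q : (Nagata R σ M)[X]) :
    sndPoly (P * Q) =
      (P.map (fstHom σ M)).map σ • sndPoly Q + Q.map (fstHom σ M) • sndPoly P := by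
  refine PolynomialModule.coeff_injective (Finsupp.ext fun k => ?_)
  simp only [PolynomialModule.coeff_add, Finsupp.add_apply, PolynomialModule.smul_apply,
    coeff_sndPoly, coeff_mul, coeff_map, fstHom_apply]
  rw [← Finset.Nat.sum_antidiagonal_swap (f := fun p => (Q.coeff p.1).1 • (P.coeff p.2).2),
    ← Finset.sum_add_distrib]
  exact map_sum (AddMonoidHom.snd R M) _ _

theorem fst_coeff_eq_zero_of_map_fstHom_eq_zero {P : (Nagata R σ M)[X]}
    (hP : P.map (fstHom σ M) = 0) (k : ℕ) : (P.coeff k).1 = 0 := by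
  simpa using congrArg (coeff · k) hP

theorem map_fstHom_inrPoly (m : PolynomialModule R M) :
    (inrPoly m : (Nagata R σ M)[X]).map (fstHom σ M) = 0 := by
  ext k; rw [coeff_map, coeff_inrPoly]; rfl

theorem sndPoly_inrPoly (m : PolynomialModule R M) :
    sndPoly (inrPoly m : (Nagata R σ M)[X]) = m := by
  ext k; rfl

theorem map_fstHom_map_inl (f : R[X]) : (f.map (inl σ M)).map (fstHom σ M) = f := by
  rw [Polynomial.map_map, fstHom_comp_inl, Polynomial.map_id]

theorem sndPoly_map_inl (f : R[X]) : sndPoly (f.map (inl σ M)) = 0 := by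
  ext k; rw [coeff_sndPoly, coeff_map]; rfl

end Nagata

open Nagata

theorem isArmendarizModule_of_isArmendarizRing {R : Type*} [CommRing R] {σ : R →+* R}
    {M : Type*} [AddCommGroup M] [Module R M] (h : IsArmendarizRing (Nagata R σ M)) :
    IsArmendarizModule R M := by
  intro m f hfm i j
  have hprod : inrPoly m * f.map (inl σ M) = 0 := by
    rw [eq_zero_iff_map_fstHom_and_sndPoly, Polynomial.map_mul, sndPoly_mul, map_fstHom_inrPoly,
      zero_mul, sndPoly_map_inl, map_fstHom_map_inl, sndPoly_inrPoly, hfm, smul_zero, zero_add]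
    exact ⟨rfl, rfl⟩
  have := h _ _ hprod i j
  rwa [coeff_inrPoly, mul_of_fst_eq_zero_left rfl, mk_zero_eq_zero_iff, coeff_map] at this

theorem isArmendarizRing_of_isArmendarizModule {R : Type*} [CommRing R] [NoZeroDivisors R]
    {σ : R →+* R} {M : Type*} [AddCommGroup M] [Module R M] (h : IsArmendarizModule R M) :
    IsArmendarizRing (Nagata R σ M) := by
  intro P Q hPQ i j
  obtain ⟨hfst, hsnd⟩ := (eq_zero_iff_map_fstHom_and_sndPoly _).1 hPQ
  rw [Polynomial.map_mul] at hfst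
  rw [sndPoly_mul] at hsnd
  rcases mul_eq_zero.1 hfst with hP | hQ
  · rw [hP, Polynomial.map_zero, zero_smul, zero_add] at hsnd
    rw [mul_of_fst_eq_zero_left (fst_coeff_eq_zero_of_map_fstHom_eq_zero hP i),
      mk_zero_eq_zero_iff]
    simpa using h _ _ hsnd i j
  · rw [hQ, zero_smul, add_zero] at hsnd
    rw [mul_of_fst_eq_zero_right _ (fst_coeff_eq_zero_of_map_fstHom_eq_zero hQ j),
      mk_zero_eq_zero_iff]
    simpa using h _ _ hsnd j i

/-- If `R` is a commutative domain, the Nagata extension `R ⊕_σ M` is an Armendariz ring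
if and only if `M` is an Armendariz module. -/
theorem nagata_armendariz_iff_armendariz_module
    (R : Type*) [CommRing R] [IsDomain R] (σ : R →+* R)
    (M : Type*) [AddCommGroup M] [Module R M] :
    IsArmendarizRing (Nagata R σ M) ↔ IsArmendarizModule R M :=
  ⟨isArmendarizModule_of_isArmendarizRing, isArmendarizRing_of_isArmendarizModule⟩
end

section
/- Let D be a commutative domain, R = D[x] the polynomial ring over D, and σ : R → R the ring endomorphism sending f(x) to the constant polynomial f(0). Then the Nagata extension R⊕_σR (with R viewed as a module over itself) is not reversible: (x,1)(0,1) = (0,0) but (0,1)(x,1) = (0,x) ≠ (0,0). -/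
/-- A ring `S` is reversible if `a * b = 0` implies `b * a = 0`. -/
def IsReversibleRing (S : Type*) [Ring S] : Prop :=
  ∀ a b : S, a * b = 0 → b * a = 0

/-- The endomorphism of `D[x]` sending `f(x)` to the constant polynomial `f(0)`. -/
noncomputable def evalZeroHom (D : Type*) [CommRing D] : Polynomial D →+* Polynomial D :=
  (Polynomial.C : D →+* Polynomial D).comp (Polynomial.evalRingHom 0)

namespace Nagata

variable {R : Type*} [CommRing R] {σ : R →+* R} {M : Type*} [AddCommGroup M] [Module R M]

theorem mk_mul_mk (a b : R) (m n : M) :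
    (mk a m * mk b n : Nagata R σ M) = mk (a * b) (σ a • n + b • m) := rfl

theorem mk_eq_zero_iff {a : R} {m : M} : (mk a m : Nagata R σ M) = 0 ↔ a = 0 ∧ m = 0 :=
  Prod.mk_eq_zero

theorem mk_mul_mk_zero_of_map_eq_zero {a : R} (ha : σ a = 0) (m n : M) :
    (mk a m * mk 0 n : Nagata R σ M) = 0 := by
  rw [mk_mul_mk, mk_eq_zero_iff, ha]
  simp

theorem mk_zero_mul_mk (a : R) (m n : M) :
    (mk 0 m * mk a n : Nagata R σ M) = mk 0 (a • m) := by
  rw [mk_mul_mk, map_zero, zero_smul, zero_add, zero_mul]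

theorem not_isReversibleRing_of_map_eq_zero {a : R} (ha : σ a = 0) {m : M} (ham : a • m ≠ 0) :
    ¬ IsReversibleRing (Nagata R σ M) := fun hrev => by
  have := hrev _ _ (mk_mul_mk_zero_of_map_eq_zero ha m m)
  rw [mk_zero_mul_mk, mk_eq_zero_iff] at this
  exact ham this.2

end Nagata

open Polynomial in
theorem evalZeroHom_X (D : Type*) [CommRing D] : evalZeroHom D X = 0 := by
  simp [evalZeroHom]

/-- Let `D` be a commutative domain, `R = D[x]`, and `σ : R → R` the endomorphism
`f(x) ↦ f(0)`.  Then the Nagata extension `R ⊕_σ R` is not reversible: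
`(x, 1) * (0, 1) = (0, 0)`, but `(0, 1) * (x, 1) = (0, x) ≠ (0, 0)`. -/
theorem nagata_evalZero_not_reversible
    (D : Type*) [CommRing D] [IsDomain D] :
    (Nagata.mk Polynomial.X 1 * Nagata.mk 0 1 :
        Nagata (Polynomial D) (evalZeroHom D) (Polynomial D)) = 0 ∧
    (Nagata.mk 0 1 * Nagata.mk Polynomial.X 1 :
        Nagata (Polynomial D) (evalZeroHom D) (Polynomial D)) = Nagata.mk 0 Polynomial.X ∧
    (Nagata.mk 0 1 * Nagata.mk Polynomial.X 1 :
        Nagata (Polynomial D) (evalZeroHom D) (Polynomial D)) ≠ 0 ∧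
    ¬ IsReversibleRing (Nagata (Polynomial D) (evalZeroHom D) (Polynomial D)) := by
  have hX : (Polynomial.X : Polynomial D) • (1 : Polynomial D) ≠ 0 := by
    rw [smul_eq_mul, mul_one]
    exact Polynomial.X_ne_zero
  refine ⟨Nagata.mk_mul_mk_zero_of_map_eq_zero (evalZeroHom_X D) 1 1, ?_, ?_,
    Nagata.not_isReversibleRing_of_map_eq_zero (evalZeroHom_X D) hX⟩
  · rw [Nagata.mk_zero_mul_mk, smul_eq_mul, mul_one]
  · rw [Nagata.mk_zero_mul_mk]
    exact fun h => hX (Nagata.mk_eq_zero_iff.mp h).2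
end

section
/- Let R be a commutative ring and M an Armendariz R-module. Let m(x) = Σ_i m_i x^i ∈ M[x] and f(x) = Σ_j a_j x^j, g(x) = Σ_k b_k x^k ∈ R[x]. Then m(x)·f(x)·g(x) = 0 in the R[x]-module M[x] if and only if (a_j·b_k)·m_i = 0 in M for all i, j, k. -/
open Polynomial

namespace PolynomialModule

variable {R M : Type*} [CommRing R] [AddCommGroup M] [Module R M]

theorem coeff_smul (r : R) (x : PolynomialModule R M) : (r • x).coeff = r • x.coeff := rfl

theorem smul_eq_zero_iff_forall_coeff {r : R} {x : PolynomialModule R M} :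
    r • x = 0 ↔ ∀ i, r • x.coeff i = 0 := by
  rw [← coeff_eq_zero, coeff_smul, Finsupp.ext_iff]
  rfl

theorem smul_eq_zero_of_forall_coeff_smul_eq_zero {f : R[X]} {x : PolynomialModule R M}
    (h : ∀ j, f.coeff j • x = 0) : f • x = 0 := by
  ext n
  rw [smul_apply]
  exact Finset.sum_eq_zero fun p _ => smul_eq_zero_iff_forall_coeff.1 (h p.1) p.2

end PolynomialModule

open PolynomialModule

theorem IsArmendarizModule.smul_eq_zero_iff {R M : Type*} [CommRing R] [AddCommGroup M]
    [Module R M] (hM : IsArmendarizModule R M) {f : R[X]} {x : PolynomialModule R M} :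
    f • x = 0 ↔ ∀ j, f.coeff j • x = 0 :=
  ⟨fun h j => smul_eq_zero_iff_forall_coeff.2 fun i => hM x f h i j,
    smul_eq_zero_of_forall_coeff_smul_eq_zero⟩

/-- If `M` is an Armendariz `R`-module, then for `m(x) ∈ M[x]` and `f(x), g(x) ∈ R[x]`,
`m(x) f(x) g(x) = 0` if and only if `(a_j b_k) • m_i = 0` for all `i, j, k`. -/
theorem armendariz_module_smul_mul_eq_zero_iff
    (R M : Type*) [CommRing R] [AddCommGroup M] [Module R M]
    (hM : IsArmendarizModule R M)
    (m : PolynomialModule R M) (f g : Polynomial R) :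
    (f * g) • m = 0 ↔ ∀ i j k, (f.coeff j * g.coeff k) • m.coeff i = 0 := by
  calc (f * g) • m = 0 ↔ ∀ j, g • f.coeff j • m = 0 := by
        rw [mul_smul, hM.smul_eq_zero_iff]
        exact forall_congr' fun j => by rw [smul_comm]
    _ ↔ ∀ j k, (f.coeff j * g.coeff k) • m = 0 := by
        simp only [hM.smul_eq_zero_iff, smul_smul, mul_comm]
    _ ↔ ∀ i j k, (f.coeff j * g.coeff k) • m.coeff i = 0 := by
        simp only [smul_eq_zero_iff_forall_coeff]
        exact ⟨fun h i j k => h j k i, fun h j k i => h i j k⟩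
end

section
/- Let R be a commutative ring, σ a ring endomorphism of R, and M an Armendariz R-module satisfying the condition (C_σ^2): for all m ∈ M and a ∈ R, (σ(a)·a)·m = 0 implies σ(a)·m = 0. Then the R[x]-module M[x] satisfies (C_{σ̄}^2), where σ̄ : R[x] → R[x] is the ring endomorphism applying σ to each coefficient (Polynomial.mapRingHom σ): that is, for all m(x) ∈ M[x] and f(x) ∈ R[x], if m(x)·(σ̄(f(x))·f(x)) = 0 in M[x] then m(x)·σ̄(f(x)) = 0 in M[x]. -/
open Polynomial

namespace PolynomialModule

variable {R M : Type*} [CommRing R] [AddCommGroup M] [Module R M]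

theorem smul_eq_zero_of_coeff_smul_coeff_eq_zero {f : R[X]} {m : PolynomialModule R M}
    (h : ∀ i j, f.coeff j • m.coeff i = 0) : f • m = 0 := by
  refine coeff_injective (Finsupp.ext fun n => ?_)
  rw [smul_apply, coeff_zero, Finsupp.zero_apply]
  exact Finset.sum_eq_zero fun x _ => h x.2 x.1

theorem coeff_smul_single_zero (f : R[X]) (m : M) (n : ℕ) :
    (f • single R 0 m).coeff n = f.coeff n • m := by
  simp

end PolynomialModule

namespace IsArmendarizModule

open PolynomialModule

variable {R M : Type*} [CommRing R] [AddCommGroup M] [Module R M]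

theorem coeff_smul_coeff_smul_coeff_eq_zero (hM : IsArmendarizModule R M) {f g : R[X]}
    {m : PolynomialModule R M} (h : (f * g) • m = 0) (i j k : ℕ) :
    f.coeff j • g.coeff k • m.coeff i = 0 := by
  have hfg : (f * g) • single R 0 (m.coeff i) = 0 :=
    smul_eq_zero_of_coeff_smul_coeff_eq_zero fun n l => by
      rw [coeff_single, Finsupp.single_apply]
      split_ifs
      · exact hM m (f * g) h i l
      · exact smul_zero _
  have hgf : f • (g • single R 0 (m.coeff i)) = 0 := by
    rwa [← mul_smul]
  simpa only [coeff_smul_single_zero] using hM _ f hgf k j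

end IsArmendarizModule

/-- If `M` is an Armendariz `R`-module satisfying the condition `(C_σ^2)`
(`(σ a * a) • m = 0` implies `σ a • m = 0`), then the `R[x]`-module `M[x]` satisfies the
condition `(C_σ̄^2)`, where `σ̄ : R[x] → R[x]` applies `σ` to every coefficient. -/
theorem polynomialModule_C2_of_armendariz_C2
    (R M : Type*) [CommRing R] [AddCommGroup M] [Module R M] (σ : R →+* R)
    (hM : IsArmendarizModule R M)
    (hC2 : ∀ (m : M) (a : R), (σ a * a) • m = 0 → σ a • m = 0) :
    ∀ (m : PolynomialModule R M) (f : Polynomial R),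
      (Polynomial.mapRingHom σ f * f) • m = 0 → (Polynomial.mapRingHom σ f) • m = 0 := by
  intro m f h
  refine PolynomialModule.smul_eq_zero_of_coeff_smul_coeff_eq_zero fun i j => ?_
  have hsq : (σ (f.coeff j) * f.coeff j) • m.coeff i = 0 := by
    rw [mul_smul]
    simpa only [coe_mapRingHom, coeff_map] using
      hM.coeff_smul_coeff_smul_coeff_eq_zero h i j j
  simpa only [coe_mapRingHom, coeff_map] using hC2 _ _ hsq
end
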